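/- arXiv:0909.0817 — 2 statements merged into one kernel-verified Lean document; each statement's English description precedes it below -/
import Mathlib

section
/- Fix natural numbers s ≤ k ≤ N. Let X : ℂ^N → ℂ^N be a ℂ-linear endomorphism and V₁, V₂ ⊆ ℂ^N subspaces with dim V₁ = k, dim V₂ = N − k, range X ⊆ V₁, range X ⊆ V₂, V₁ ⊆ ker X, V₂ ⊆ ker X. Assume moreover dim(ker X) ≥ N − k + s and dim(V₁ ∩ V₂) ≥ k − s. Then there exist subspaces W₁ ⊆ W₂ ⊆ ℂ^N with dim W₁ = k − s and dim W₂ = N − k + s such that range X ⊆ W₁, W₁ ⊆ V₁ ∩ V₂, V₁ + V₂ ⊆ W₂ and W₂ ⊆ ker X. -/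
/-!
Rank–nullity gives `dim (range X) ≤ k - s`, and the dimension formula for `V₁ + V₂` gives
`dim (V₁ + V₂) ≤ N - k + s`. Since any chain `A ≤ B` of subspaces can be refined to a subspace
of every intermediate dimension, `W₁` is found between `range X` and `V₁ ∩ V₂`, and `W₂` between
`V₁ + V₂` and `ker X`.
-/

open Module LinearMap

namespace Submodule

variable {K V : Type*} [DivisionRing K] [AddCommGroup V] [Module K V] [Module.Finite K V]

theorem exists_finrank_eq_succ_of_lt {W B : Submodule K V} (hWB : W < B) :
    ∃ W', W ≤ W' ∧ W' ≤ B ∧ finrank K W' = finrank K W + 1 := by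
  obtain ⟨x, hxB, hxW⟩ := SetLike.exists_of_lt hWB
  exact ⟨W ⊔ span K {x}, le_sup_left, sup_le hWB.le ((span_singleton_le_iff_mem x B).mpr hxB),
    finrank_sup_span_singleton hxW⟩

theorem exists_finrank_eq_of_le {A B : Submodule K V} (hAB : A ≤ B) {d : ℕ}
    (hA : finrank K A ≤ d) (hB : d ≤ finrank K B) :
    ∃ W, A ≤ W ∧ W ≤ B ∧ finrank K W = d := by
  obtain ⟨n, rfl⟩ := Nat.exists_eq_add_of_le hA
  induction n with
  | zero => exact ⟨A, le_rfl, hAB, rfl⟩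
  | succ n ih =>
    obtain ⟨W, hAW, hWB, hW⟩ := ih (by omega) (by omega)
    have hlt : W < B := lt_of_le_of_ne hWB fun h => by subst h; omega
    obtain ⟨W', hWW', hW'B, hW'⟩ := exists_finrank_eq_succ_of_lt hlt
    exact ⟨W', hAW.trans hWW', hW'B, by omega⟩

end Submodule

theorem exists_flag_of_stratum_general
    (s k N : ℕ)
    (X : (Fin N → ℂ) →ₗ[ℂ] (Fin N → ℂ))
    (V₁ V₂ : Submodule ℂ (Fin N → ℂ))
    (hdV₁ : finrank ℂ V₁ = k) (hdV₂ : finrank ℂ V₂ = N - k)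
    (hr₁ : range X ≤ V₁) (hr₂ : range X ≤ V₂)
    (hk₁ : V₁ ≤ ker X) (hk₂ : V₂ ≤ ker X)
    (hker : N - k + s ≤ finrank ℂ (ker X))
    (hinf : k - s ≤ finrank ℂ ↥(V₁ ⊓ V₂)) :
    ∃ W₁ W₂ : Submodule ℂ (Fin N → ℂ), W₁ ≤ W₂ ∧
      finrank ℂ W₁ = k - s ∧ finrank ℂ W₂ = N - k + s ∧
      range X ≤ W₁ ∧ W₁ ≤ V₁ ⊓ V₂ ∧ V₁ ⊔ V₂ ≤ W₂ ∧ W₂ ≤ ker X := by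
  have hrank_nullity : finrank ℂ (range X) + finrank ℂ (ker X) = N := by
    simpa using X.finrank_range_add_finrank_ker
  have hsup_inf := Submodule.finrank_sup_add_finrank_inf_eq V₁ V₂
  have hsup_le : finrank ℂ ↥(V₁ ⊔ V₂) ≤ N := by simpa using (V₁ ⊔ V₂).finrank_le
  obtain ⟨W₁, hXW₁, hW₁V, hdW₁⟩ :=
    Submodule.exists_finrank_eq_of_le (le_inf hr₁ hr₂) (by omega) hinf
  obtain ⟨W₂, hVW₂, hW₂X, hdW₂⟩ :=
    Submodule.exists_finrank_eq_of_le (sup_le hk₁ hk₂) (by omega) hker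
  exact ⟨W₁, W₂, hW₁V.trans (inf_le_sup.trans hVW₂), hdW₁, hdW₂, hXW₁, hW₁V, hVW₂, hW₂X⟩

/-- Set-theoretic surjectivity of the resolution `Z''_s(k,N) → Z_s(k,N)`:
every point of `Z_s(k,N)` admits a flag `W₁ ⊆ W₂` as in `Z''_s(k,N)`. -/
theorem exists_flag_of_stratum
    (s k N : ℕ) (hsk : s ≤ k) (hkN : k ≤ N)
    (X : (Fin N → ℂ) →ₗ[ℂ] (Fin N → ℂ))
    (V₁ V₂ : Submodule ℂ (Fin N → ℂ))
    (hdV₁ : finrank ℂ V₁ = k) (hdV₂ : finrank ℂ V₂ = N - k)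
    (hr₁ : range X ≤ V₁) (hr₂ : range X ≤ V₂)
    (hk₁ : V₁ ≤ ker X) (hk₂ : V₂ ≤ ker X)
    (hker : N - k + s ≤ finrank ℂ (ker X))
    (hinf : k - s ≤ finrank ℂ ↥(V₁ ⊓ V₂)) :
    ∃ W₁ W₂ : Submodule ℂ (Fin N → ℂ), W₁ ≤ W₂ ∧
      finrank ℂ W₁ = k - s ∧ finrank ℂ W₂ = N - k + s ∧
      range X ≤ W₁ ∧ W₁ ≤ V₁ ⊓ V₂ ∧ V₁ ⊔ V₂ ≤ W₂ ∧ W₂ ≤ ker X :=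
  exists_flag_of_stratum_general s k N X V₁ V₂ hdV₁ hdV₂ hr₁ hr₂ hk₁ hk₂ hker hinf
end

section
/- Fix natural numbers s ≤ k ≤ N. Let X : ℂ^N → ℂ^N be a ℂ-linear endomorphism and V₁, V₂ ⊆ ℂ^N subspaces with dim V₁ = k, dim V₂ = N − k, range X ⊆ V₁, range X ⊆ V₂, V₁ ⊆ ker X, V₂ ⊆ ker X, and assume the open condition dim(ker X) + dim(V₁ ∩ V₂) ≤ N + 1. Suppose (W₁, W₂) and (W₁′, W₂′) are two pairs of subspaces of ℂ^N such that dim W₁ = dim W₁′ = k − s, dim W₂ = dim W₂′ = N − k + s, range X ⊆ W₁ ⊆ V₁ ∩ V₂, range X ⊆ W₁′ ⊆ V₁ ∩ V₂, V₁ + V₂ ⊆ W₂ ⊆ ker X and V₁ + V₂ ⊆ W₂′ ⊆ ker X. Then W₁ = W₁′ and W₂ = W₂′. -/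
/-!
By rank–nullity, `dim ker X = N - dim (range X)`, and since `dim V₁ + dim V₂ = N`,
`dim (V₁ + V₂) = N - dim (V₁ ∩ V₂)`. The open condition therefore says that both intervals
`range X ≤ W₁ ≤ V₁ ∩ V₂` and `V₁ + V₂ ≤ W₂ ≤ ker X` have length at most one, and in such an
interval a subspace is determined by its dimension.
-/

open Module LinearMap

theorem Submodule.eq_of_mem_Icc_of_finrank_eq {K V : Type*} [DivisionRing K] [AddCommGroup V]
    [Module K V] [FiniteDimensional K V] {A B W W' : Submodule K V}
    (hW : W ∈ Set.Icc A B) (hW' : W' ∈ Set.Icc A B) (hAB : finrank K B ≤ finrank K A + 1)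
    (h : finrank K W = finrank K W') : W = W' := by
  have := Submodule.finrank_mono hW.1
  have := Submodule.finrank_mono hW.2
  rcases (by omega : finrank K W = finrank K A ∨ finrank K B ≤ finrank K W) with hA | hB
  · rw [← Submodule.eq_of_le_of_finrank_eq hW.1 hA.symm,
      ← Submodule.eq_of_le_of_finrank_eq hW'.1 (hA.symm.trans h)]
  · rw [Submodule.eq_of_le_of_finrank_le hW.2 hB,
      Submodule.eq_of_le_of_finrank_le hW'.2 (h ▸ hB)]

theorem flag_unique_on_open_locus_general
    (s k N : ℕ) (hkN : k ≤ N)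
    (X : (Fin N → ℂ) →ₗ[ℂ] (Fin N → ℂ))
    (V₁ V₂ : Submodule ℂ (Fin N → ℂ))
    (hdV₁ : finrank ℂ V₁ = k) (hdV₂ : finrank ℂ V₂ = N - k)
    (hopen : finrank ℂ (ker X) + finrank ℂ ↥(V₁ ⊓ V₂) ≤ N + 1)
    (W₁ W₂ W₁' W₂' : Submodule ℂ (Fin N → ℂ))
    (hdW₁ : finrank ℂ W₁ = k - s) (hdW₁' : finrank ℂ W₁' = k - s)
    (hdW₂ : finrank ℂ W₂ = N - k + s) (hdW₂' : finrank ℂ W₂' = N - k + s)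
    (hrW₁ : range X ≤ W₁) (hW₁ : W₁ ≤ V₁ ⊓ V₂)
    (hrW₁' : range X ≤ W₁') (hW₁' : W₁' ≤ V₁ ⊓ V₂)
    (hW₂ : V₁ ⊔ V₂ ≤ W₂) (hkW₂ : W₂ ≤ ker X)
    (hW₂' : V₁ ⊔ V₂ ≤ W₂') (hkW₂' : W₂' ≤ ker X) :
    W₁ = W₁' ∧ W₂ = W₂' := by
  have hrank : finrank ℂ (range X) + finrank ℂ (ker X) = N := by
    simpa using X.finrank_range_add_finrank_ker
  have hsup := Submodule.finrank_sup_add_finrank_inf_eq V₁ V₂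
  rw [hdV₁, hdV₂] at hsup
  exact ⟨Submodule.eq_of_mem_Icc_of_finrank_eq ⟨hrW₁, hW₁⟩ ⟨hrW₁', hW₁'⟩ (by omega)
      (hdW₁.trans hdW₁'.symm),
    Submodule.eq_of_mem_Icc_of_finrank_eq ⟨hW₂, hkW₂⟩ ⟨hW₂', hkW₂'⟩ (by omega)
      (hdW₂.trans hdW₂'.symm)⟩

/-- Injectivity of the resolution `Z''_s(k,N) → Z_s(k,N)` over the open locus
`dim ker X + dim (V₁ ∩ V₂) ≤ N + 1`: the flag `W₁ ⊆ W₂` is unique. -/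
theorem flag_unique_on_open_locus
    (s k N : ℕ) (hsk : s ≤ k) (hkN : k ≤ N)
    (X : (Fin N → ℂ) →ₗ[ℂ] (Fin N → ℂ))
    (V₁ V₂ : Submodule ℂ (Fin N → ℂ))
    (hdV₁ : finrank ℂ V₁ = k) (hdV₂ : finrank ℂ V₂ = N - k)
    (hr₁ : range X ≤ V₁) (hr₂ : range X ≤ V₂)
    (hk₁ : V₁ ≤ ker X) (hk₂ : V₂ ≤ ker X)
    (hopen : finrank ℂ (ker X) + finrank ℂ ↥(V₁ ⊓ V₂) ≤ N + 1)
    (W₁ W₂ W₁' W₂' : Submodule ℂ (Fin N → ℂ))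
    (hdW₁ : finrank ℂ W₁ = k - s) (hdW₁' : finrank ℂ W₁' = k - s)
    (hdW₂ : finrank ℂ W₂ = N - k + s) (hdW₂' : finrank ℂ W₂' = N - k + s)
    (hrW₁ : range X ≤ W₁) (hW₁ : W₁ ≤ V₁ ⊓ V₂)
    (hrW₁' : range X ≤ W₁') (hW₁' : W₁' ≤ V₁ ⊓ V₂)
    (hW₂ : V₁ ⊔ V₂ ≤ W₂) (hkW₂ : W₂ ≤ ker X)
    (hW₂' : V₁ ⊔ V₂ ≤ W₂') (hkW₂' : W₂' ≤ ker X) :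
    W₁ = W₁' ∧ W₂ = W₂' :=
  flag_unique_on_open_locus_general s k N hkN X V₁ V₂ hdV₁ hdV₂ hopen W₁ W₂ W₁' W₂' hdW₁ hdW₁' hdW₂
    hdW₂' hrW₁ hW₁ hrW₁' hW₁' hW₂ hkW₂ hW₂' hkW₂'
end
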